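/- arXiv:2105.00760 — 2 statements merged into one kernel-verified Lean document; each statement's English description precedes it below -/
import Mathlib

section
/- The Lagrangian dual of the dual is the primal: under assumption (F), for every x ∈ ℝ^n the quantity sup over λ ∈ ℝ^I with λ ≥ 0 and w₀,…,w_I ∈ ℝ^n of [ −f₀*(w₀) − Σ_{i=1}^I λ_i f_i*(w_i/λ_i) + Σ_{i=0}^I w_iᵀx ] equals f₀(x) if f_i(x) ≤ 0 for all i = 1,…,I, and equals +∞ otherwise. Consequently, the Lagrangian dual of problem (D), obtained by minimizing this quantity over x ∈ ℝ^n, is equivalent to problem (P). -/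
noncomputable section
open scoped BigOperators Classical

/-- Dot product on `ℝ^n`. -/
def dotp {n : ℕ} (x y : Fin n → ℝ) : ℝ := ∑ i, x i * y i

/-- The (effective) domain of an extended-real-valued function. -/
def edom {n : ℕ} (f : (Fin n → ℝ) → EReal) : Set (Fin n → ℝ) := {x | f x < ⊤}

/-- `f` is proper: it never takes the value `−∞` and is `< +∞` somewhere. -/
def ProperFn {n : ℕ} (f : (Fin n → ℝ) → EReal) : Prop := (∀ x, f x ≠ ⊥) ∧ (∃ x, f x ≠ ⊤)

/-- `f` is closed: lower semicontinuous, and either nowhere `−∞` or identically `−∞`. -/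
def ClosedFn {n : ℕ} (f : (Fin n → ℝ) → EReal) : Prop :=
  LowerSemicontinuous f ∧ ((∀ x, f x ≠ ⊥) ∨ (∀ x, f x = ⊥))

/-- Convexity of an extended-real-valued function, via convexity of its epigraph. -/
def ConvexFn {n : ℕ} (f : (Fin n → ℝ) → EReal) : Prop :=
  Convex ℝ {p : (Fin n → ℝ) × ℝ | f p.1 ≤ (p.2 : EReal)}

/-- The conjugate `f*(w) = sup_x { wᵀx − f(x) }`. -/
def conjFn {n : ℕ} (f : (Fin n → ℝ) → EReal) (w : Fin n → ℝ) : EReal :=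
  ⨆ x : Fin n → ℝ, (((dotp w x : ℝ) : EReal) - f x)

/-- The support function `δ*_X(w) = sup_{x ∈ X} xᵀw`. -/
def suppFn {n : ℕ} (X : Set (Fin n → ℝ)) (w : Fin n → ℝ) : EReal :=
  ⨆ x ∈ X, ((dotp x w : ℝ) : EReal)

/-- The convex perspective `t f(x/t)` of a proper closed convex function `f`,
equal to `t f(x/t)` for `t > 0` and to `δ*_{dom f*}(x)` for `t = 0`. -/
def persp {n : ℕ} (f : (Fin n → ℝ) → EReal) (x : Fin n → ℝ) (t : ℝ) : EReal :=
  if 0 < t then (t : EReal) * f (t⁻¹ • x) else suppFn (edom (conjFn f)) x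

variable {n I : ℕ}

/-- Assumption (F): each `f_i`, `i = 0, 1, …, I`, is proper, closed and convex. -/
def AssumptionF (f : Fin (I + 1) → (Fin n → ℝ) → EReal) : Prop :=
  ∀ i, ProperFn (f i) ∧ ClosedFn (f i) ∧ ConvexFn (f i)

/-- Feasible region of the primal problem (P): the constraints `f_i(x) ≤ 0` hold for
`i = 1, …, I` and the objective value is not `+∞`. -/
def primalFeas (f : Fin (I + 1) → (Fin n → ℝ) → EReal) : Set (Fin n → ℝ) :=
  {x | (∀ i : Fin I, f i.succ x ≤ 0) ∧ f 0 x ≠ ⊤}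

/-- Optimal value of the primal problem (P) (`+∞` if (P) is infeasible). -/
def primalVal (f : Fin (I + 1) → (Fin n → ℝ) → EReal) : EReal :=
  ⨅ x ∈ primalFeas f, f 0 x

/-- (P) is solvable: it is infeasible, or a feasible point attains the optimal value. -/
def primalSolvable (f : Fin (I + 1) → (Fin n → ℝ) → EReal) : Prop :=
  primalFeas f = ∅ ∨ ∃ x ∈ primalFeas f, f 0 x = primalVal f

/-- Objective of the dual problem (D):
`−f₀*(w₀) − Σ_{i=1}^I λ_i f_i*(w_i/λ_i)` (perspectives of the conjugates). -/
def dualObj (f : Fin (I + 1) → (Fin n → ℝ) → EReal)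
    (w : Fin (I + 1) → Fin n → ℝ) (lam : Fin I → ℝ) : EReal :=
  - conjFn (f 0) (w 0) - ∑ i : Fin I, persp (conjFn (f i.succ)) (w i.succ) (lam i)

/-- Feasible region of the dual problem (D): `Σ_i w_i = 0`, `λ ≥ 0`, and the
objective value is not `−∞`. -/
def dualFeas (f : Fin (I + 1) → (Fin n → ℝ) → EReal) :
    Set ((Fin (I + 1) → Fin n → ℝ) × (Fin I → ℝ)) :=
  {p | (∑ i, p.1 i) = 0 ∧ (∀ i, 0 ≤ p.2 i) ∧ dualObj f p.1 p.2 ≠ ⊥}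

/-- Optimal value of the dual problem (D) (`−∞` if (D) is infeasible). -/
def dualVal (f : Fin (I + 1) → (Fin n → ℝ) → EReal) : EReal :=
  ⨆ p ∈ dualFeas f, dualObj f p.1 p.2

/-- (D) is solvable: it is infeasible, or a feasible point attains the optimal value. -/
def dualSolvable (f : Fin (I + 1) → (Fin n → ℝ) → EReal) : Prop :=
  dualFeas f = ∅ ∨ ∃ p ∈ dualFeas f, dualObj f p.1 p.2 = dualVal f

/-- `f` is an affine ("linear") constraint function. -/
def IsAffineFn {n : ℕ} (f : (Fin n → ℝ) → EReal) : Prop :=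
  ∃ (a : Fin n → ℝ) (b : ℝ), ∀ x, f x = ((dotp a x + b : ℝ) : EReal)

/-- Slater point of the primal problem (P): `xS` lies in the relative interior of the
domains of `f₀, …, f_I`, is feasible, and satisfies every nonlinear inequality
constraint strictly. -/
def SlaterPrimal (f : Fin (I + 1) → (Fin n → ℝ) → EReal) (xS : Fin n → ℝ) : Prop :=
  (∀ i : Fin (I + 1), xS ∈ intrinsicInterior ℝ (edom (f i))) ∧
  (∀ i : Fin I, f i.succ xS ≤ 0) ∧
  (∀ i : Fin I, ¬ IsAffineFn (f i.succ) → f i.succ xS < 0)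

/-- Slater point of the dual problem (D) (a maximization problem whose explicit
constraints are the affine equalities `Σ_i w_i = 0` and the linear inequalities
`λ ≥ 0`): a feasible point in the relative interior of the domain of minus the
objective. -/
def SlaterDual (f : Fin (I + 1) → (Fin n → ℝ) → EReal)
    (p : (Fin (I + 1) → Fin n → ℝ) × (Fin I → ℝ)) : Prop :=
  p ∈ intrinsicInterior ℝ
      {q : (Fin (I + 1) → Fin n → ℝ) × (Fin I → ℝ) | dualObj f q.1 q.2 ≠ ⊥} ∧
  (∑ i, p.1 i) = 0 ∧ (∀ i, 0 ≤ p.2 i)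

/-- Strict Slater point of the dual problem (D): additionally all inequality
constraints `λ ≥ 0` hold strictly. -/
def StrictSlaterDual (f : Fin (I + 1) → (Fin n → ℝ) → EReal)
    (p : (Fin (I + 1) → Fin n → ℝ) × (Fin I → ℝ)) : Prop :=
  SlaterDual f p ∧ ∀ i, 0 < p.2 i

/-! For fixed `x` the Lagrangian splits into `⟪w₀, x⟫ - f₀*(w₀)` and the terms
`⟪wᵢ, x⟫ - λᵢ fᵢ*(wᵢ/λᵢ)`, `i ≥ 1`.

The supremum of the first is `f₀(x)` by Fenchel–Moreau, in the form: a proper closed convex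
function is the supremum of its affine minorants. This comes from separating a point below the
epigraph from the epigraph; a vertical separating hyperplane is turned into a non-vertical one by
tilting some affine minorant along it.

If `fᵢ(x) ≤ 0`, Fenchel–Young gives `⟪wᵢ, x⟫ ≤ λᵢ fᵢ*(wᵢ/λᵢ)`, also for `λᵢ = 0`, because
`fᵢ** ≤ fᵢ` puts `x` in `dom fᵢ**`. If `fᵢ(x) > 0`, an affine minorant of `fᵢ` that is positive
at `x` gives a `v` with `fᵢ*(v) < ⟪v, x⟫`. Along `(wᵢ, λᵢ) = t (v, 1)` the Lagrangian then
tends to `+∞`. -/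

theorem dotp_comm (x y : Fin n → ℝ) : dotp x y = dotp y x := dotProduct_comm x y

theorem dotp_zero_left (y : Fin n → ℝ) : dotp 0 y = 0 := zero_dotProduct y

theorem dotp_zero_right (x : Fin n → ℝ) : dotp x 0 = 0 := dotProduct_zero x

theorem dotp_smul_left (t : ℝ) (x y : Fin n → ℝ) : dotp (t • x) y = t * dotp x y :=
  smul_dotProduct t x y

theorem dotp_sub_left (x x' y : Fin n → ℝ) : dotp (x - x') y = dotp x y - dotp x' y :=
  sub_dotProduct x x' y

theorem EReal.coe_sub_le_comm {d : ℝ} {a b : EReal} :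
    (d : EReal) - a ≤ b ↔ (d : EReal) - b ≤ a := by
  induction a using EReal.rec <;> induction b using EReal.rec <;>
    simp [EReal.sub_top, ← EReal.coe_sub, add_comm]

theorem EReal.le_of_forall_coe_lt {a b : EReal} (h : ∀ r : ℝ, (r : EReal) < a → (r : EReal) < b) :
    a ≤ b :=
  le_of_forall_lt fun _ hc => by
    obtain ⟨r, hcr, hra⟩ := EReal.exists_between_coe_real hc
    exact hcr.trans (h r hra)

theorem exists_pos_lt_add_mul {α β : ℝ} (hβ : 0 < β) (K : ℝ) : ∃ t, 0 < t ∧ K < α + t * β := by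
  refine ⟨(|K - α| + 1) / β, by positivity, ?_⟩
  rw [div_mul_cancel₀ _ hβ.ne']
  linarith [le_abs_self (K - α)]

theorem EReal.coe_finset_sum {ι : Type*} (s : Finset ι) (g : ι → ℝ) :
    ((∑ i ∈ s, g i : ℝ) : EReal) = ∑ i ∈ s, (g i : EReal) :=
  map_sum (⟨⟨(↑), EReal.coe_zero⟩, EReal.coe_add⟩ : ℝ →+ EReal) g s

theorem isClosed_epigraph_coe {α : Type*} [TopologicalSpace α] {g : α → EReal}
    (hg : LowerSemicontinuous g) : IsClosed {p : α × ℝ | g p.1 ≤ (p.2 : EReal)} :=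
  hg.isClosed_epigraph.preimage
    (continuous_fst.prodMk (continuous_coe_real_ereal.comp continuous_snd))

section Conjugate

variable {f : (Fin n → ℝ) → EReal}

def IsAffineMinorant (f : (Fin n → ℝ) → EReal) (w : Fin n → ℝ) (M : ℝ) : Prop :=
  ∀ y, ((dotp w y - M : ℝ) : EReal) ≤ f y

theorem conjFn_le_iff {w : Fin n → ℝ} {M : EReal} :
    conjFn f w ≤ M ↔ ∀ y, (dotp w y : EReal) - M ≤ f y := by
  simp only [conjFn, iSup_le_iff, EReal.coe_sub_le_comm]

theorem conjFn_le_coe_iff {w : Fin n → ℝ} {M : ℝ} : conjFn f w ≤ M ↔ IsAffineMinorant f w M := by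
  rw [conjFn_le_iff, IsAffineMinorant]
  simp only [EReal.coe_sub]

theorem dotp_sub_conjFn_le (w x : Fin n → ℝ) : (dotp w x : EReal) - conjFn f w ≤ f x :=
  conjFn_le_iff.1 le_rfl x

theorem conjFn_conjFn_le (x : Fin n → ℝ) : conjFn (conjFn f) x ≤ f x :=
  iSup_le fun w => dotp_comm x w ▸ dotp_sub_conjFn_le w x

theorem IsAffineMinorant.tilt {w a : Fin n → ℝ} {M c t : ℝ} (h : IsAffineMinorant f w M)
    (ha : ∀ y, f y ≠ ⊤ → c < dotp a y) (ht : 0 ≤ t) :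
    IsAffineMinorant f (w - t • a) (M - t * c) := by
  intro y
  by_cases hy : f y = ⊤
  · simp [hy]
  refine le_trans (EReal.coe_le_coe_iff.2 ?_) (h y)
  rw [dotp_sub_left, dotp_smul_left]
  nlinarith [ha y hy]

theorem exists_separating_dotp (hlsc : LowerSemicontinuous f) (hconv : ConvexFn f)
    {x : Fin n → ℝ} {r : ℝ} (hx : ¬ f x ≤ r) :
    ∃ (a : Fin n → ℝ) (b c : ℝ), dotp a x + b * r < c ∧
      ∀ y (s : ℝ), f y ≤ s → c < dotp a y + b * s := by
  obtain ⟨g, c, hgx, hg⟩ := geometric_hahn_banach_point_closed hconv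
    (isClosed_epigraph_coe hlsc) (x := (x, r)) hx
  let a := (dotProductEquiv ℝ (Fin n)).symm (g.toLinearMap ∘ₗ LinearMap.inl ℝ _ ℝ)
  have hg_eq : ∀ y s, g (y, s) = dotp a y + g (0, 1) * s := by
    intro y s
    have ha : dotp a y = g (y, 0) :=
      LinearMap.congr_fun ((dotProductEquiv ℝ (Fin n)).apply_symm_apply _) y
    rw [ha, mul_comm, ← smul_eq_mul, ← map_smul, ← map_add]
    simp
  exact ⟨a, g (0, 1), c, hg_eq x r ▸ hgx, fun y s hys => hg_eq y s ▸ hg (y, s) hys⟩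

theorem slope_nonneg_of_separating {a x₀ : Fin n → ℝ} {b c s₀ : ℝ} (hx₀ : f x₀ ≤ s₀)
    (h : ∀ y (s : ℝ), f y ≤ s → c < dotp a y + b * s) : 0 ≤ b := by
  by_contra! hb
  set t := (dotp a x₀ + b * s₀ - c) / -b
  have h₀ := h x₀ s₀ hx₀
  have hbt : -b * t = dotp a x₀ + b * s₀ - c := mul_div_cancel₀ _ (neg_ne_zero.2 hb.ne)
  have ht := h x₀ (s₀ + t) (hx₀.trans (EReal.coe_le_coe_iff.2 (by nlinarith)))
  nlinarith

theorem isAffineMinorant_of_separating (hne : ∀ y, f y ≠ ⊥) {a : Fin n → ℝ} {b c : ℝ}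
    (hb : 0 < b) (h : ∀ y (s : ℝ), f y ≤ s → c < dotp a y + b * s) :
    IsAffineMinorant f (-b⁻¹ • a) (-(c / b)) := by
  intro y
  have hy := h y
  have hy_ne := hne y
  generalize f y = e at hy hy_ne ⊢
  induction e using EReal.rec with
  | bot => exact absurd rfl hy_ne
  | top => exact le_top
  | coe s =>
    have hs := hy s le_rfl
    rw [EReal.coe_le_coe_iff, dotp_smul_left, ← sub_nonneg]
    have h_eq : s - (-b⁻¹ * dotp a y - -(c / b)) = (dotp a y + b * s - c) / b := by
      field_simp
      ring
    rw [h_eq]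
    exact div_nonneg (by linarith) hb.le

theorem ProperFn.exists_eq_coe (hf : ProperFn f) : ∃ (x₀ : Fin n → ℝ) (s₀ : ℝ), f x₀ = s₀ :=
  let ⟨x₀, hx₀⟩ := hf.2
  ⟨x₀, (f x₀).toReal, (EReal.coe_toReal hx₀ (hf.1 x₀)).symm⟩

theorem ProperFn.exists_isAffineMinorant (hf : ProperFn f) (hlsc : LowerSemicontinuous f)
    (hconv : ConvexFn f) : ∃ w M, IsAffineMinorant f w M := by
  obtain ⟨x₀, s₀, hs₀⟩ := hf.exists_eq_coe
  have hx₀ : ¬ f x₀ ≤ ((s₀ - 1 : ℝ) : EReal) := by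
    rw [hs₀, EReal.coe_le_coe_iff]
    linarith
  obtain ⟨a, b, c, hlt, hepi⟩ := exists_separating_dotp hlsc hconv hx₀
  have hb : 0 < b := by nlinarith [hepi x₀ s₀ hs₀.le]
  exact ⟨_, _, isAffineMinorant_of_separating hf.1 hb hepi⟩

theorem ProperFn.exists_isAffineMinorant_lt (hf : ProperFn f) (hlsc : LowerSemicontinuous f)
    (hconv : ConvexFn f) {x : Fin n → ℝ} {r : ℝ} (hr : (r : EReal) < f x) :
    ∃ w M, IsAffineMinorant f w M ∧ r < dotp w x - M := by
  obtain ⟨a, b, c, hlt, hepi⟩ := exists_separating_dotp hlsc hconv (not_le.2 hr)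
  obtain ⟨x₀, s₀, hs₀⟩ := hf.exists_eq_coe
  rcases (slope_nonneg_of_separating hs₀.le hepi).eq_or_lt with rfl | hb
  · -- the separating hyperplane is vertical: tilt an arbitrary affine minorant along it
    obtain ⟨w₀, M₀, hmin⟩ := hf.exists_isAffineMinorant hlsc hconv
    have ha : ∀ y, f y ≠ ⊤ → c < dotp a y := fun y hy => by
      obtain ⟨s, hs, -⟩ := EReal.exists_between_coe_real (lt_top_iff_ne_top.2 hy)
      simpa using hepi y s hs.le
    obtain ⟨t, ht, hrt⟩ :=
      exists_pos_lt_add_mul (α := dotp w₀ x - M₀) (β := c - dotp a x) (by simpa using hlt) r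
    refine ⟨_, _, hmin.tilt ha ht.le, ?_⟩
    rw [dotp_sub_left, dotp_smul_left]
    linarith
  · refine ⟨_, _, isAffineMinorant_of_separating hf.1 hb hepi, ?_⟩
    rw [dotp_smul_left, ← sub_pos]
    have h_eq : -b⁻¹ * dotp a x - -(c / b) - r = (c - dotp a x - b * r) / b := by
      field_simp
      ring
    rw [h_eq]
    exact div_pos (by linarith) hb

end Conjugate

section Perspective

variable {f : (Fin n → ℝ) → EReal}

theorem persp_of_pos (g : (Fin n → ℝ) → EReal) (u : Fin n → ℝ) {t : ℝ} (ht : 0 < t) :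
    persp g u t = t * g (t⁻¹ • u) :=
  if_pos ht

theorem persp_smul_self (g : (Fin n → ℝ) → EReal) (v : Fin n → ℝ) {t : ℝ} (ht : 0 < t) :
    persp g (t • v) t = t * g v := by
  rw [persp_of_pos g _ ht, smul_smul, inv_mul_cancel₀ ht.ne', one_smul]

theorem persp_conjFn_zero_zero (hf : ∃ x, f x ≠ ⊤) : persp (conjFn f) 0 0 = 0 := by
  obtain ⟨x₀, hx₀⟩ := hf
  have hmem : x₀ ∈ edom (conjFn (conjFn f)) :=
    (conjFn_conjFn_le x₀).trans_lt (lt_top_iff_ne_top.2 hx₀)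
  rw [persp, if_neg (lt_irrefl 0), suppFn]
  simp only [dotp_zero_right, EReal.coe_zero]
  exact biSup_const ⟨x₀, hmem⟩

theorem dotp_le_persp_conjFn {x : Fin n → ℝ} (hx : f x ≤ 0) (u : Fin n → ℝ) {t : ℝ}
    (ht : 0 ≤ t) : (dotp u x : EReal) ≤ persp (conjFn f) u t := by
  rcases ht.eq_or_lt with rfl | ht
  · have hmem : x ∈ edom (conjFn (conjFn f)) :=
      (conjFn_conjFn_le x).trans_lt (hx.trans_lt EReal.zero_lt_top)
    rw [persp, if_neg (lt_irrefl 0), suppFn, dotp_comm]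
    exact le_biSup (fun y => (dotp y u : EReal)) hmem
  · set v := t⁻¹ • u
    have hv : (dotp v x : EReal) ≤ conjFn f v :=
      calc (dotp v x : EReal) = dotp v x - 0 := (sub_zero _).symm
        _ ≤ dotp v x - f x := EReal.sub_le_sub le_rfl hx
        _ ≤ conjFn f v := le_iSup (fun y => (dotp v y : EReal) - f y) x
    calc (dotp u x : EReal) = t * dotp v x := by
          rw [← EReal.coe_mul, dotp_smul_left, ← mul_assoc, mul_inv_cancel₀ ht.ne', one_mul]
      _ ≤ t * conjFn f v := mul_le_mul_of_nonneg_left hv (EReal.coe_nonneg.2 ht.le)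
      _ = persp (conjFn f) u t := (persp_of_pos _ u ht).symm

end Perspective

section Lagrangian

variable {f : Fin (I + 1) → (Fin n → ℝ) → EReal} {x : Fin n → ℝ}

def dualLagrangian (f : Fin (I + 1) → (Fin n → ℝ) → EReal) (x : Fin n → ℝ)
    (w : Fin (I + 1) → Fin n → ℝ) (lam : Fin I → ℝ) : EReal :=
  dualObj f w lam + ((∑ i, dotp (w i) x : ℝ) : EReal)

theorem dualLagrangian_le (hx : ∀ i : Fin I, f i.succ x ≤ 0) (w : Fin (I + 1) → Fin n → ℝ)
    {lam : Fin I → ℝ} (hlam : ∀ i, 0 ≤ lam i) : dualLagrangian f x w lam ≤ f 0 x := by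
  set S := ∑ i : Fin I, persp (conjFn (f i.succ)) (w i.succ) (lam i) with hS_def
  have hS : ((∑ i : Fin I, dotp (w i.succ) x : ℝ) : EReal) ≤ S := by
    rw [EReal.coe_finset_sum]
    exact Finset.sum_le_sum fun i _ => dotp_le_persp_conjFn (hx i) _ (hlam i)
  calc dualLagrangian f x w lam
      = ((dotp (w 0) x : EReal) - conjFn (f 0) (w 0))
          + (((∑ i : Fin I, dotp (w i.succ) x : ℝ) : EReal) - S) := by
        rw [dualLagrangian, dualObj, Fin.sum_univ_succ, EReal.coe_add]
        simp only [sub_eq_add_neg, hS_def]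
        ac_rfl
    _ ≤ f 0 x + 0 := add_le_add (dotp_sub_conjFn_le _ _) (EReal.sub_nonpos.2 hS)
    _ = f 0 x := add_zero _

theorem dualLagrangian_cons_zero (h0 : ∀ i : Fin I, persp (conjFn (f i.succ)) 0 0 = 0)
    (w₀ : Fin n → ℝ) : dualLagrangian f x (Fin.cons w₀ 0) 0 = dotp w₀ x - conjFn (f 0) w₀ := by
  simp [dualLagrangian, dualObj, Fin.sum_univ_succ, h0, dotp_zero_left, sub_eq_add_neg, add_comm]

theorem dualLagrangian_cons_single (h0 : ∀ i : Fin I, persp (conjFn (f i.succ)) 0 0 = 0)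
    (u v : Fin n → ℝ) (i : Fin I) {t : ℝ} (ht : 0 < t) :
    dualLagrangian f x (Fin.cons u (Pi.single i (t • v))) (Pi.single i t)
      = -conjFn (f 0) u - t * conjFn (f i.succ) v + ((dotp u x + t * dotp v x : ℝ) : EReal) := by
  have hpersp : ∀ j, persp (conjFn (f j.succ)) ((Pi.single i (t • v) : Fin I → Fin n → ℝ) j)
        ((Pi.single i t : Fin I → ℝ) j)
      = (Pi.single i ((t : EReal) * conjFn (f i.succ) v) : Fin I → EReal) j := by
    intro j
    rcases eq_or_ne j i with rfl | hj
    · simp [persp_smul_self _ _ ht]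
    · simp [hj, h0]
  have hdot : ∀ j, dotp ((Pi.single i (t • v) : Fin I → Fin n → ℝ) j) x
      = (Pi.single i (t * dotp v x) : Fin I → ℝ) j := by
    intro j
    rcases eq_or_ne j i with rfl | hj
    · simp [dotp_smul_left]
    · simp [hj, dotp_zero_left]
  simp only [dualLagrangian, dualObj, Fin.sum_univ_succ, Fin.cons_zero, Fin.cons_succ, hpersp,
    hdot, Finset.sum_pi_single']
  simp

theorem iSup_dualLagrangian_of_feasible (hF : AssumptionF f) (hx : ∀ i : Fin I, f i.succ x ≤ 0) :
    ⨆ p ∈ {q : (Fin (I + 1) → Fin n → ℝ) × (Fin I → ℝ) | ∀ i, 0 ≤ q.2 i},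
      dualLagrangian f x p.1 p.2 = f 0 x := by
  refine le_antisymm (iSup₂_le fun p hp => dualLagrangian_le hx p.1 hp)
    (EReal.le_of_forall_coe_lt fun r hr => ?_)
  obtain ⟨w, M, hmin, hrw⟩ := (hF 0).1.exists_isAffineMinorant_lt (hF 0).2.1.1 (hF 0).2.2 hr
  have hp : ((Fin.cons w 0, 0) : (Fin (I + 1) → Fin n → ℝ) × (Fin I → ℝ)) ∈
      {q : (Fin (I + 1) → Fin n → ℝ) × (Fin I → ℝ) | ∀ i, 0 ≤ q.2 i} := fun _ => le_rfl
  refine lt_of_lt_of_le ?_ (le_iSup₂_of_le _ hp le_rfl)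
  dsimp only
  rw [dualLagrangian_cons_zero (fun i => persp_conjFn_zero_zero (hF i.succ).1.2)]
  calc (r : EReal) < (dotp w x - M : ℝ) := EReal.coe_lt_coe_iff.2 hrw
    _ = (dotp w x : EReal) - M := EReal.coe_sub _ _
    _ ≤ dotp w x - conjFn (f 0) w := EReal.sub_le_sub le_rfl (conjFn_le_coe_iff.2 hmin)

theorem iSup_dualLagrangian_of_infeasible (hF : AssumptionF f) {i : Fin I}
    (hi : 0 < f i.succ x) :
    ⨆ p ∈ {q : (Fin (I + 1) → Fin n → ℝ) × (Fin I → ℝ) | ∀ i, 0 ≤ q.2 i},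
      dualLagrangian f x p.1 p.2 = ⊤ := by
  obtain ⟨v, c, hv, hvx⟩ := (hF i.succ).1.exists_isAffineMinorant_lt (hF i.succ).2.1.1
    (hF i.succ).2.2 (r := 0) (by exact_mod_cast hi)
  obtain ⟨u, M, hu⟩ := (hF 0).1.exists_isAffineMinorant (hF 0).2.1.1 (hF 0).2.2
  rw [EReal.eq_top_iff_forall_lt]
  intro K
  obtain ⟨t, ht, hK⟩ :=
    exists_pos_lt_add_mul (α := dotp u x - M) (by linarith : 0 < dotp v x - c) K
  have hp : ((Fin.cons u (Pi.single i (t • v)), Pi.single i t) :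
      (Fin (I + 1) → Fin n → ℝ) × (Fin I → ℝ)) ∈
      {q : (Fin (I + 1) → Fin n → ℝ) × (Fin I → ℝ) | ∀ i, 0 ≤ q.2 i} :=
    (Pi.single_nonneg.2 ht.le : (0 : Fin I → ℝ) ≤ Pi.single i t)
  refine lt_of_lt_of_le ?_ (le_iSup₂_of_le _ hp le_rfl)
  dsimp only
  rw [dualLagrangian_cons_single (fun j => persp_conjFn_zero_zero (hF j.succ).1.2) u v i ht]
  have hobj : ((-M - t * c : ℝ) : EReal) ≤ -conjFn (f 0) u - t * conjFn (f i.succ) v := by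
    rw [EReal.coe_sub, EReal.coe_neg, EReal.coe_mul]
    exact EReal.sub_le_sub (EReal.neg_le_neg_iff.2 (conjFn_le_coe_iff.2 hu))
      (mul_le_mul_of_nonneg_left (conjFn_le_coe_iff.2 hv) (EReal.coe_nonneg.2 ht.le))
  calc (K : EReal) < ((-M - t * c) + (dotp u x + t * dotp v x) : ℝ) :=
        EReal.coe_lt_coe_iff.2 (by linarith)
    _ = ((-M - t * c : ℝ) : EReal) + ((dotp u x + t * dotp v x : ℝ) : EReal) := EReal.coe_add _ _
    _ ≤ _ := add_le_add_left hobj _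

theorem iSup_dualLagrangian (hF : AssumptionF f) (x : Fin n → ℝ) :
    ⨆ p ∈ {q : (Fin (I + 1) → Fin n → ℝ) × (Fin I → ℝ) | ∀ i, 0 ≤ q.2 i},
      dualLagrangian f x p.1 p.2 = if ∀ i : Fin I, f i.succ x ≤ 0 then f 0 x else ⊤ := by
  split_ifs with hx
  · exact iSup_dualLagrangian_of_feasible hF hx
  · obtain ⟨i, hi⟩ := not_forall.1 hx
    exact iSup_dualLagrangian_of_infeasible hF (not_le.1 hi)

end Lagrangian

theorem iInf_ite_eq_primalVal (f : Fin (I + 1) → (Fin n → ℝ) → EReal) :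
    ⨅ x, (if ∀ i : Fin I, f i.succ x ≤ 0 then f 0 x else ⊤) = primalVal f := by
  refine iInf_congr fun x => ?_
  by_cases hx : ∀ i : Fin I, f i.succ x ≤ 0 <;> by_cases htop : f 0 x = ⊤ <;>
    simp [primalFeas, hx, htop]

/-- **The Lagrangian dual of the dual is the primal** (Lemma A.1): under assumption (F),
for every `x` the supremum over `λ ≥ 0` and `w₀, …, w_I` of
`−f₀*(w₀) − Σ_i λ_i f_i*(w_i/λ_i) + Σ_i w_iᵀx` equals `f₀(x)` if `f_i(x) ≤ 0` for all
`i = 1, …, I` and `+∞` otherwise; consequently, minimizing this quantity over `x`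
recovers the optimal value of (P). -/
theorem lagrangian_dual_of_dual_is_primal (n I : ℕ)
    (f : Fin (I + 1) → (Fin n → ℝ) → EReal) (hF : AssumptionF f) :
    (∀ x : Fin n → ℝ,
      (⨆ p ∈ {q : (Fin (I + 1) → Fin n → ℝ) × (Fin I → ℝ) | ∀ i, 0 ≤ q.2 i},
          dualObj f p.1 p.2 + ((∑ i : Fin (I + 1), dotp (p.1 i) x : ℝ) : EReal))
        = if ∀ i : Fin I, f i.succ x ≤ 0 then f 0 x else ⊤) ∧
    (⨅ x : Fin n → ℝ,
        (⨆ p ∈ {q : (Fin (I + 1) → Fin n → ℝ) × (Fin I → ℝ) | ∀ i, 0 ≤ q.2 i},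
          dualObj f p.1 p.2 + ((∑ i : Fin (I + 1), dotp (p.1 i) x : ℝ) : EReal)))
      = primalVal f :=
  ⟨iSup_dualLagrangian hF, (iInf_congr (iSup_dualLagrangian hF)).trans (iInf_ite_eq_primalVal f)⟩
end
end

section
/- Growth of non-negative convex functions: if f : ℝ^d → [0,+∞] is lower semicontinuous and convex and satisfies f(z) = 0 if and only if z = 0, then there exists δ > 0 such that f(z) ≥ δ‖z‖₂ − 1 for all z ∈ ℝ^d. -/
/-! The unit sphere is compact and `f` is lower semicontinuous and positive on it, so `f ≥ c > 0`
there. Since `f 0 = 0`, convexity along the segment from `0` to `z` gives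
`f (z / ‖z‖) ≤ f z / ‖z‖`, hence `f z ≥ c ‖z‖` once `‖z‖ ≥ 1`; inside the unit ball `δ ‖z‖ - 1 ≤ 0`
for `δ ≤ 1`. -/

open Metric

theorem IsCompact.exists_pos_real_le_of_lowerSemicontinuousOn {α : Type*} [TopologicalSpace α]
    {f : α → EReal} {K : Set α} (hK : IsCompact K) (hf : LowerSemicontinuousOn f K)
    (hpos : ∀ x ∈ K, 0 < f x) : ∃ c : ℝ, 0 < c ∧ ∀ x ∈ K, (c : EReal) ≤ f x := by
  rcases K.eq_empty_or_nonempty with rfl | hne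
  · exact ⟨1, one_pos, by simp⟩
  obtain ⟨x₀, hx₀, hmin⟩ := hf.exists_isMinOn hne hK
  obtain ⟨c, hc0, hcx₀⟩ := EReal.lt_iff_exists_real_btwn.1 (hpos x₀ hx₀)
  exact ⟨c, by exact_mod_cast hc0, fun x hx => hcx₀.le.trans (hmin hx)⟩

section ConvexEpigraph

variable {E : Type*} {f : E → EReal}

theorem apply_smul_le_of_convex_epigraph [AddCommGroup E] [Module ℝ E]
    (hconv : Convex ℝ {p : E × ℝ | f p.1 ≤ (p.2 : EReal)}) (h0 : f 0 ≤ 0)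
    {z : E} {s t : ℝ} (hs : f z ≤ s) (ht₀ : 0 ≤ t) (ht₁ : t ≤ 1) :
    f (t • z) ≤ ((t * s : ℝ) : EReal) := by
  have hseg := hconv (x := (z, s)) (y := (0, 0)) hs (by simpa using h0) ht₀ (sub_nonneg.2 ht₁)
    (add_sub_cancel t 1)
  simpa using hseg

theorem mul_norm_le_of_convex_epigraph [NormedAddCommGroup E] [NormedSpace ℝ E]
    (hconv : Convex ℝ {p : E × ℝ | f p.1 ≤ (p.2 : EReal)}) (h0 : f 0 ≤ 0)
    {c : ℝ} (hc : ∀ w ∈ sphere (0 : E) 1, (c : EReal) ≤ f w) {z : E} (hz : 1 ≤ ‖z‖) :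
    ((c * ‖z‖ : ℝ) : EReal) ≤ f z := by
  have hz₀ : 0 < ‖z‖ := one_pos.trans_le hz
  refine EReal.le_of_forall_lt_iff_le.1 fun s hs => ?_
  have hw : ‖z‖⁻¹ • z ∈ sphere (0 : E) 1 := by
    simpa using norm_smul_inv_norm (𝕜 := ℝ) (norm_pos_iff.1 hz₀)
  have hcs : c ≤ ‖z‖⁻¹ * s := by
    have := (hc _ hw).trans (apply_smul_le_of_convex_epigraph hconv h0 hs.le
      (inv_nonneg.2 hz₀.le) (inv_le_one_of_one_le₀ hz))
    exact_mod_cast this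
  have : c * ‖z‖ ≤ s := by
    rwa [inv_mul_eq_div, le_div_iff₀ hz₀] at hcs
  exact_mod_cast this

end ConvexEpigraph

/-- **Growth of non-negative convex functions.**
If `f : ℝ^d → [0,+∞]` is lower semicontinuous and convex (in the extended-real sense,
i.e. its epigraph is convex) and satisfies `f z = 0` if and only if `z = 0`, then there
exists `δ > 0` such that `f z ≥ δ‖z‖₂ − 1` for all `z`. -/
theorem growth_of_nonneg_convex (d : ℕ) (f : EuclideanSpace ℝ (Fin d) → EReal)
    (hconv : Convex ℝ {p : EuclideanSpace ℝ (Fin d) × ℝ | f p.1 ≤ (p.2 : EReal)})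
    (hlsc : LowerSemicontinuous f)
    (hnonneg : ∀ z, 0 ≤ f z)
    (hzero : ∀ z, f z = 0 ↔ z = 0) :
    ∃ δ : ℝ, 0 < δ ∧ ∀ z, ((δ * ‖z‖ - 1 : ℝ) : EReal) ≤ f z := by
  have hpos : ∀ w ∈ sphere (0 : EuclideanSpace ℝ (Fin d)) 1, 0 < f w := fun w hw =>
    (hnonneg w).lt_of_ne' fun h => ne_zero_of_mem_unit_sphere ⟨w, hw⟩ ((hzero w).1 h)
  obtain ⟨c, hc₀, hc⟩ := (isCompact_sphere _ _).exists_pos_real_le_of_lowerSemicontinuousOn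
    (hlsc.lowerSemicontinuousOn _) hpos
  refine ⟨min c 1, lt_min hc₀ one_pos, fun z => ?_⟩
  rcases le_total ‖z‖ 1 with hz | hz
  · have : min c 1 * ‖z‖ - 1 ≤ 0 := by
      nlinarith [min_le_right c 1, norm_nonneg z, lt_min hc₀ one_pos]
    exact (EReal.coe_nonpos.2 this).trans (hnonneg z)
  · have : min c 1 * ‖z‖ - 1 ≤ c * ‖z‖ := by
      nlinarith [min_le_left c 1, norm_nonneg z]
    exact (EReal.coe_le_coe_iff.2 this).trans
      (mul_norm_le_of_convex_epigraph hconv ((hzero 0).2 rfl).le hc hz)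
end
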